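/- Under the same first-step scheme assumptions, the following H¹-type bound holds: ∑_i h_i((U_i¹ − Φ_i)/Δt)² + (1/12)∑_{i=0}^{N} ℓ_{i+1/2}(U¹_{i+1} − U¹_i)² ≤ ∑_i h_i Ψ_i² + (9/4)∑_{i=0}^N ℓ_{i+1/2}(Φ_{i+1} − Φ_i)² + (Δt² + 2δ²/C₂⁴)∑_{i=0}^N ℓ_{i+1/2}(Ψ_{i+1} − Ψ_i)². -/

import Mathlib

open Finset

/-- The right-hand side of the first-step implicit scheme: the Kelvin–Voigt term
built from the discretized initial velocity `Ψ` on the damped region. -/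
noncomputable def rhs0KV (δ h : ℝ) (Nα Nd : ℕ) (Ψ : ℕ → ℝ) (i : ℕ) : ℝ :=
  if i = Nα + 1 then δ * (Ψ (i + 1) - Ψ i) / h
  else if Nα + 2 ≤ i ∧ i ≤ Nα + Nd - 1 then
    δ * (Ψ (i + 1) - 2 * Ψ i + Ψ (i - 1)) / h
  else if i = Nα + Nd then -(δ * (Ψ i - Ψ (i - 1)) / h)
  else 0

/-!
Test the scheme at node `i` with `Wᵢ = U¹ᵢ - Φᵢ` and sum over the nodes. The scheme says that
`2 hᵢ Wᵢ / Δt² - 2 hᵢ Ψᵢ / Δt` is the discrete divergence of the edge flux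
`Fᵢ = ℓᵢ ∂U¹ᵢ - Δt ℓᵢ ∂Ψᵢ + (δ / h) ∂Ψᵢ 1_damped`, so summation by parts turns the sum into
`∑ᵢ (2 hᵢ xᵢ² - 2 hᵢ Ψᵢ xᵢ) + ∑ᵢ Fᵢ ∂Wᵢ = 0` with `xᵢ = Wᵢ / Δt`.
At the nodes `2x² - 2Ψx ≥ x² - Ψ²`. On the damped edges `ℓᵢ = C₂² / h`, so the Kelvin–Voigt flux
is `(δ / C₂²) ℓᵢ ∂Ψᵢ`, and Young's inequality on each edge bounds `Fᵢ ∂Wᵢ` from below.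
-/

theorem sum_Icc_sub_mul_add_sum_range_mul_sub {R : Type*} [CommRing R] (g W : ℕ → R) (N : ℕ) :
    ∑ i ∈ Icc 1 N, (g i - g (i - 1)) * W i + ∑ i ∈ range (N + 1), g i * (W (i + 1) - W i) =
      g N * W (N + 1) - g 0 * W 0 := by
  induction N with
  | zero => simp [mul_sub]
  | succ N ih =>
    rw [sum_Icc_succ_top (by omega), sum_range_succ, Nat.add_sub_cancel]
    linear_combination ih

noncomputable def dampedDiff (Nα Nd : ℕ) (Ψ : ℕ → ℝ) (i : ℕ) : ℝ :=
  if Nα + 1 ≤ i ∧ i ≤ Nα + Nd - 1 then Ψ (i + 1) - Ψ i else 0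

theorem rhs0KV_eq_div_mul_sub (δ h : ℝ) {Nα Nd : ℕ} (hNd : 2 ≤ Nd) (Ψ : ℕ → ℝ) (i : ℕ) :
    rhs0KV δ h Nα Nd Ψ i = δ / h * (dampedDiff Nα Nd Ψ i - dampedDiff Nα Nd Ψ (i - 1)) := by
  unfold rhs0KV dampedDiff
  split_ifs <;> first
    | (exfalso; omega)
    | (rw [Nat.sub_add_cancel (by omega)]; ring)
    | ring

theorem exists_div_mul_dampedDiff_eq {Nα Nd : ℕ} {δ h C2 : ℝ} (hC2 : C2 ≠ 0) {ℓ : ℕ → ℝ}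
    (hℓdamp : ∀ i ∈ Icc Nα (Nα + Nd - 1), ℓ i = C2 ^ 2 / h) (Ψ : ℕ → ℝ) (i : ℕ) :
    ∃ s : ℝ, s ^ 2 ≤ δ ^ 2 / C2 ^ 4 ∧
      δ / h * dampedDiff Nα Nd Ψ i = s * (ℓ i * (Ψ (i + 1) - Ψ i)) := by
  unfold dampedDiff
  split_ifs with hdamp
  · refine ⟨δ / C2 ^ 2, by rw [div_pow, ← pow_mul], ?_⟩
    rw [hℓdamp i (mem_Icc.mpr ⟨by omega, hdamp.2⟩)]
    field_simp
  · exact ⟨0, by rw [sq, zero_mul]; positivity, by simp⟩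

theorem young_edge {L T M s a b c : ℝ} (hL : 0 ≤ L) (hs : s ^ 2 ≤ M) :
    1 / 12 * (L * b ^ 2) - 9 / 4 * (L * a ^ 2) - (T ^ 2 + 2 * M) * (L * c ^ 2) ≤
      (L * b - T * (L * c) + s * (L * c)) * (b - a) := by
  -- `T c (b - a) ≤ T² c² + (a² + b²) / 2`, `s c (b - a) ≥ -2 s² c² - (a² + b²) / 4`,
  -- `a b ≤ b² / 6 + 3 a² / 2`.
  have hYoung : 1 / 12 * b ^ 2 - 9 / 4 * a ^ 2 - (T ^ 2 + 2 * M) * c ^ 2 ≤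
      (b - T * c + s * c) * (b - a) := by
    nlinarith [sq_nonneg (T * c - b), sq_nonneg (T * c + a), sq_nonneg (s * c + b / 2),
      sq_nonneg (s * c - a / 2), sq_nonneg (3 * a - b),
      mul_le_mul_of_nonneg_right hs (sq_nonneg c)]
  linear_combination L * hYoung

noncomputable def firstStepFlux (Δt δ h : ℝ) (Nα Nd : ℕ) (ℓ U Ψ : ℕ → ℝ) (i : ℕ) : ℝ :=
  ℓ i * (U (i + 1) - U i) - Δt * (ℓ i * (Ψ (i + 1) - Ψ i)) + δ / h * dampedDiff Nα Nd Ψ i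

theorem sq_sub_sq_le_firstStepFlux_sub_mul {Nα Nd : ℕ} (hNd : 2 ≤ Nd) {Δt δ h m : ℝ}
    (hm : 0 ≤ m) {ℓ U Φ Ψ : ℕ → ℝ} {i : ℕ} (hi : 1 ≤ i)
    (hscheme : 2 * m * (U i - Φ i) / Δt ^ 2 - (2 * m / Δt) * Ψ i -
        (ℓ i * (U (i + 1) - U i) - ℓ (i - 1) * (U i - U (i - 1))) +
        Δt * (ℓ i * (Ψ (i + 1) - Ψ i) - ℓ (i - 1) * (Ψ i - Ψ (i - 1))) =
        rhs0KV δ h Nα Nd Ψ i) :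
    m * ((U i - Φ i) / Δt) ^ 2 - m * Ψ i ^ 2 ≤
      (firstStepFlux Δt δ h Nα Nd ℓ U Ψ i - firstStepFlux Δt δ h Nα Nd ℓ U Ψ (i - 1)) *
        (U i - Φ i) := by
  rw [rhs0KV_eq_div_mul_sub δ h hNd] at hscheme
  have hdiv : firstStepFlux Δt δ h Nα Nd ℓ U Ψ i - firstStepFlux Δt δ h Nα Nd ℓ U Ψ (i - 1) =
      2 * m * (U i - Φ i) / Δt ^ 2 - (2 * m / Δt) * Ψ i := by
    simp only [firstStepFlux, Nat.sub_add_cancel hi]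
    linear_combination -hscheme
  rw [hdiv]
  linear_combination mul_nonneg hm (sq_nonneg ((U i - Φ i) / Δt - Ψ i))

theorem le_firstStepFlux_mul_sub {Nα Nd : ℕ} {Δt δ h C2 : ℝ} (hC2 : C2 ≠ 0) {ℓ : ℕ → ℝ}
    (hℓdamp : ∀ i ∈ Icc Nα (Nα + Nd - 1), ℓ i = C2 ^ 2 / h) (U Φ Ψ : ℕ → ℝ) {i : ℕ}
    (hℓ : 0 ≤ ℓ i) :
    1 / 12 * (ℓ i * (U (i + 1) - U i) ^ 2) - 9 / 4 * (ℓ i * (Φ (i + 1) - Φ i) ^ 2) -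
        (Δt ^ 2 + 2 * δ ^ 2 / C2 ^ 4) * (ℓ i * (Ψ (i + 1) - Ψ i) ^ 2) ≤
      firstStepFlux Δt δ h Nα Nd ℓ U Ψ i * ((U (i + 1) - Φ (i + 1)) - (U i - Φ i)) := by
  obtain ⟨s, hs, hkv⟩ := exists_div_mul_dampedDiff_eq (δ := δ) hC2 hℓdamp Ψ i
  have hYoung := young_edge (T := Δt) (a := Φ (i + 1) - Φ i) (b := U (i + 1) - U i)
    (c := Ψ (i + 1) - Ψ i) hℓ hs
  simp only [firstStepFlux, hkv]
  linear_combination hYoung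

theorem first_step_H1_stability_general
    (Nmax Nα Nd : ℕ) (hNd : 2 ≤ Nd)
    (Δt δ h C2 : ℝ) (hC2 : 0 < C2)
    (hi : ℕ → ℝ) (hipos : ∀ i ∈ Icc 1 Nmax, 0 < hi i)
    (ℓ : ℕ → ℝ) (hℓpos : ∀ i ∈ range (Nmax + 1), 0 < ℓ i)
    (hℓdamp : ∀ i ∈ Icc Nα (Nα + Nd - 1), ℓ i = C2 ^ 2 / h)
    (U1 Φ Ψ : ℕ → ℝ)
    (hU10 : U1 0 = 0) (hU1N : U1 (Nmax + 1) = 0)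
    (hΦ0 : Φ 0 = 0) (hΦN : Φ (Nmax + 1) = 0)
    (hscheme : ∀ i ∈ Icc 1 Nmax,
      2 * hi i * (U1 i - Φ i) / Δt ^ 2 - (2 * hi i / Δt) * Ψ i -
        (ℓ i * (U1 (i + 1) - U1 i) - ℓ (i - 1) * (U1 i - U1 (i - 1))) +
        Δt * (ℓ i * (Ψ (i + 1) - Ψ i) - ℓ (i - 1) * (Ψ i - Ψ (i - 1))) =
        rhs0KV δ h Nα Nd Ψ i) :
    ∑ i ∈ Icc 1 Nmax, hi i * ((U1 i - Φ i) / Δt) ^ 2 +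
        (1 / 12) * ∑ i ∈ range (Nmax + 1), ℓ i * (U1 (i + 1) - U1 i) ^ 2 ≤
      ∑ i ∈ Icc 1 Nmax, hi i * (Ψ i) ^ 2 +
        (9 / 4) * ∑ i ∈ range (Nmax + 1), ℓ i * (Φ (i + 1) - Φ i) ^ 2 +
        (Δt ^ 2 + 2 * δ ^ 2 / C2 ^ 4) *
          ∑ i ∈ range (Nmax + 1), ℓ i * (Ψ (i + 1) - Ψ i) ^ 2 := by
  set F := firstStepFlux Δt δ h Nα Nd ℓ U1 Ψ
  have hnodes := sum_le_sum fun i hi_mem => sq_sub_sq_le_firstStepFlux_sub_mul hNd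
    (hipos i hi_mem).le (mem_Icc.mp hi_mem).1 (hscheme i hi_mem)
  have hedges := sum_le_sum fun i hi_mem =>
    le_firstStepFlux_mul_sub (δ := δ) (Δt := Δt) hC2.ne' hℓdamp U1 Φ Ψ (hℓpos i hi_mem).le
  have hparts := sum_Icc_sub_mul_add_sum_range_mul_sub F (fun i => U1 i - Φ i) Nmax
  simp only [hU10, hU1N, hΦ0, hΦN, sub_zero, mul_zero] at hparts
  simp only [sum_sub_distrib, ← mul_sum] at hnodes hedges
  linarith

/-- First-time-step H¹-type stability estimate for the implicit finite volume
scheme: the discrete time derivative of `U¹` in L² and its discrete H¹ semi-norm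
are bounded by the initial data `Φ`, `Ψ`. -/
theorem first_step_H1_stability
    (Nmax Nα Nd : ℕ) (hNα : 1 ≤ Nα) (hNd : 2 ≤ Nd) (hsum : Nα + Nd ≤ Nmax)
    (Δt δ h C2 : ℝ) (hΔt : 0 < Δt) (hδ : 0 ≤ δ) (hh : 0 < h) (hC2 : 0 < C2)
    (hi : ℕ → ℝ) (hipos : ∀ i ∈ Icc 1 Nmax, 0 < hi i)
    (ℓ : ℕ → ℝ) (hℓpos : ∀ i ∈ range (Nmax + 1), 0 < ℓ i)
    (hℓdamp : ∀ i ∈ Icc Nα (Nα + Nd - 1), ℓ i = C2 ^ 2 / h)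
    (U1 Φ Ψ : ℕ → ℝ)
    (hU10 : U1 0 = 0) (hU1N : U1 (Nmax + 1) = 0)
    (hΦ0 : Φ 0 = 0) (hΦN : Φ (Nmax + 1) = 0)
    (hΨ0 : Ψ 0 = 0) (hΨN : Ψ (Nmax + 1) = 0)
    (hscheme : ∀ i ∈ Icc 1 Nmax,
      2 * hi i * (U1 i - Φ i) / Δt ^ 2 - (2 * hi i / Δt) * Ψ i -
        (ℓ i * (U1 (i + 1) - U1 i) - ℓ (i - 1) * (U1 i - U1 (i - 1))) +
        Δt * (ℓ i * (Ψ (i + 1) - Ψ i) - ℓ (i - 1) * (Ψ i - Ψ (i - 1))) =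
        rhs0KV δ h Nα Nd Ψ i) :
    ∑ i ∈ Icc 1 Nmax, hi i * ((U1 i - Φ i) / Δt) ^ 2 +
        (1 / 12) * ∑ i ∈ range (Nmax + 1), ℓ i * (U1 (i + 1) - U1 i) ^ 2 ≤
      ∑ i ∈ Icc 1 Nmax, hi i * (Ψ i) ^ 2 +
        (9 / 4) * ∑ i ∈ range (Nmax + 1), ℓ i * (Φ (i + 1) - Φ i) ^ 2 +
        (Δt ^ 2 + 2 * δ ^ 2 / C2 ^ 4) *
          ∑ i ∈ range (Nmax + 1), ℓ i * (Ψ (i + 1) - Ψ i) ^ 2 :=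
  first_step_H1_stability_general Nmax Nα Nd hNd Δt δ h C2 hC2 hi hipos ℓ hℓpos hℓdamp U1 Φ Ψ hU10
    hU1N hΦ0 hΦN hscheme
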